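/- arXiv:1309.0593 — 4 statements merged into one kernel-verified Lean document; each statement's English description precedes it below -/
import Mathlib

section
/- Let A, B, C be finite sets in a commutative group. Then |A + B + C|² ≤ |A + B| · |A + C| · |B + C|. -/
/-!
Order `G` linearly and represent each `s ∈ A + B + C` by the triple `(a, b, c) ∈ A × B × C`
with `a + b + c = s` whose pair `(a, b)` is lexicographically least. If two such minimal triples
have the same `a + b` (or `a + c`, or `b + c`), exchanging the matching coordinates produces
competing representations of both sums, and minimality forces the two pairs to coincide. So each
pairwise projection of the set `T` of minimal triples injects into the corresponding two-fold
sumset, while `|T| ≥ |A + B + C|`; the discrete Loomis–Whitney inequality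
`|T|² ≤ |π₁₂ T| |π₁₃ T| |π₂₃ T|` finishes the proof.
-/

open Pointwise Finset

theorem Finset.loomis_whitney_card {α β γ : Type*} [DecidableEq α] [DecidableEq β]
    [DecidableEq γ] (T : Finset (α × β × γ)) :
    #T ^ 2 ≤ #(T.image fun t => (t.1, t.2.1)) * #(T.image fun t => (t.1, t.2.2)) *
      #(T.image fun t => t.2) := by
  set p : α × β × γ → α × β := fun t => (t.1, t.2.1)
  set P := T.image p
  let fiber (q : α × β) := T.filter (p · = q)
  let W := (T ×ˢ T).filter fun tu => p tu.1 = p tu.2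
  have card_T : #T = ∑ q ∈ P, #(fiber q) :=
    card_eq_sum_card_fiberwise fun t ht => mem_image_of_mem p ht
  have card_W : #W = ∑ q ∈ P, #(fiber q) ^ 2 := by
    rw [card_eq_sum_card_fiberwise (f := fun tu => p tu.1) (t := P) fun tu htu =>
      mem_image_of_mem p (mem_product.1 (mem_filter.1 htu).1).1]
    refine sum_congr rfl fun q _ => ?_
    rw [sq, ← card_product]
    congr 1
    ext ⟨t, u⟩
    simp only [fiber, mem_filter, mem_product]
    constructor
    · rintro ⟨⟨⟨ht, hu⟩, htu⟩, rfl⟩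
      exact ⟨⟨ht, rfl⟩, hu, htu.symm⟩
    · rintro ⟨⟨ht, rfl⟩, hu, hut⟩
      exact ⟨⟨⟨ht, hu⟩, hut.symm⟩, rfl⟩
  -- a pair `((a, b, c), (a, b, c'))` of triples with the same `(a, b)` is recovered from
  -- `((a, c'), (b, c))`
  have card_W_le : #W ≤ #(T.image fun t => (t.1, t.2.2)) * #(T.image fun t => t.2) := by
    rw [← card_product]
    refine card_le_card_of_injOn (fun tu => ((tu.2.1, tu.2.2.2), tu.1.2))
      (fun tu htu => ?_) ?_
    · obtain ⟨ht, hu⟩ := mem_product.1 (mem_filter.1 (mem_coe.1 htu)).1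
      exact mem_product.2 ⟨mem_image_of_mem _ hu, mem_image_of_mem _ ht⟩
    · rintro ⟨⟨a, b, c⟩, ⟨a', b', c'⟩⟩ h ⟨⟨x, y, z⟩, ⟨x', y', z'⟩⟩ h' heq
      obtain ⟨-, hab⟩ := mem_filter.1 h
      obtain ⟨-, hxy⟩ := mem_filter.1 h'
      simp only [p, Prod.mk.injEq] at hab hxy heq
      grind
  calc #T ^ 2 = (∑ q ∈ P, #(fiber q)) ^ 2 := by rw [card_T]
    _ ≤ #P * ∑ q ∈ P, #(fiber q) ^ 2 := sq_sum_le_card_mul_sum_sq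
    _ = #P * #W := by rw [card_W]
    _ ≤ #P * (#(T.image fun t => (t.1, t.2.2)) * #(T.image fun t => t.2)) := by
      gcongr
    _ = _ := (mul_assoc _ _ _).symm

theorem Finset.card_image_le_of_comp {ι α β : Type*} [DecidableEq α] {T : Finset ι}
    {U : Finset β} {p : ι → α} (f : α → β) (hmaps : ∀ t ∈ T, f (p t) ∈ U)
    (hinj : ∀ t ∈ T, ∀ u ∈ T, f (p t) = f (p u) → p t = p u) : #(T.image p) ≤ #U := by
  refine card_le_card_of_injOn f ?_ ?_ <;> rw [coe_image]
  · rintro _ ⟨t, ht, rfl⟩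
    exact hmaps t ht
  · rintro _ ⟨t, ht, rfl⟩ _ ⟨u, hu, rfl⟩ h
    exact hinj t ht u hu h

section LexMinReps

variable {G : Type*} [AddCommGroup G] [LinearOrder G] [DecidableEq G] (A B C : Finset G)

def lexMinReps : Finset (G × G × G) :=
  (A ×ˢ B ×ˢ C).filter fun t => ∀ a ∈ A, ∀ b ∈ B, ∀ c ∈ C,
    a + b + c = t.1 + t.2.1 + t.2.2 → toLex (t.1, t.2.1) ≤ toLex (a, b)

variable {A B C}

theorem mem_lexMinReps {a b c : G} :
    (a, b, c) ∈ lexMinReps A B C ↔ (a ∈ A ∧ b ∈ B ∧ c ∈ C) ∧ ∀ a' ∈ A, ∀ b' ∈ B, ∀ c' ∈ C,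
      a' + b' + c' = a + b + c → toLex (a, b) ≤ toLex (a', b') := by
  simp only [lexMinReps, mem_filter, mem_product]

variable (A B C)

theorem card_add_add_le_card_lexMinReps : #(A + B + C) ≤ #(lexMinReps A B C) := by
  refine le_trans (card_le_card fun s hs => ?_) (card_image_le (f := fun t => t.1 + t.2.1 + t.2.2))
  obtain ⟨_, hab, c, hc, rfl⟩ := mem_add.1 hs
  obtain ⟨a, ha, b, hb, rfl⟩ := mem_add.1 hab
  obtain ⟨⟨a₀, b₀, c₀⟩, h₀, hmin⟩ :=
    exists_min_image ((A ×ˢ B ×ˢ C).filter fun t => t.1 + t.2.1 + t.2.2 = a + b + c)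
      (fun t => toLex (t.1, t.2.1)) ⟨(a, b, c), by simp [ha, hb, hc]⟩
  simp only [mem_filter, mem_product] at h₀ hmin
  refine mem_image.2 ⟨(a₀, b₀, c₀), mem_lexMinReps.2 ⟨h₀.1, fun a' ha' b' hb' c' hc' h => ?_⟩, h₀.2⟩
  exact hmin (a', b', c') ⟨⟨ha', hb', hc'⟩, h.trans h₀.2⟩

theorem card_image_lexMinReps_le_card_add_ab :
    #((lexMinReps A B C).image fun t => (t.1, t.2.1)) ≤ #(A + B) := by
  refine card_image_le_of_comp (fun x => x.1 + x.2) ?_ ?_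
  · rintro ⟨a, b, c⟩ ht
    exact add_mem_add (mem_lexMinReps.1 ht).1.1 (mem_lexMinReps.1 ht).1.2.1
  · rintro ⟨a, b, c⟩ ht ⟨a', b', c'⟩ ht' (h : a + b = a' + b')
    obtain ⟨⟨ha, hb, hc⟩, hmin⟩ := mem_lexMinReps.1 ht
    obtain ⟨⟨ha', hb', hc'⟩, hmin'⟩ := mem_lexMinReps.1 ht'
    exact toLex_inj.1 <| le_antisymm (hmin a' ha' b' hb' c hc (by rw [← h]))
      (hmin' a ha b hb c' hc' (by rw [h]))

theorem card_image_lexMinReps_le_card_add_ac :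
    #((lexMinReps A B C).image fun t => (t.1, t.2.2)) ≤ #(A + C) := by
  refine card_image_le_of_comp (fun x => x.1 + x.2) ?_ ?_
  · rintro ⟨a, b, c⟩ ht
    exact add_mem_add (mem_lexMinReps.1 ht).1.1 (mem_lexMinReps.1 ht).1.2.2
  · rintro ⟨a, b, c⟩ ht ⟨a', b', c'⟩ ht' (h : a + c = a' + c')
    obtain ⟨⟨ha, hb, hc⟩, hmin⟩ := mem_lexMinReps.1 ht
    obtain ⟨⟨ha', hb', hc'⟩, hmin'⟩ := mem_lexMinReps.1 ht'
    have hle := hmin a' ha' b hb c' hc' (by rw [add_right_comm, ← h, add_right_comm])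
    have hge := hmin' a ha b' hb' c hc (by rw [add_right_comm, h, add_right_comm])
    have hfst : a = a' :=
      le_antisymm (Prod.Lex.toLex_le_toLex'.1 hle).1 (Prod.Lex.toLex_le_toLex'.1 hge).1
    subst hfst
    exact Prod.ext rfl (add_left_cancel h)

theorem card_image_lexMinReps_le_card_add_bc :
    #((lexMinReps A B C).image fun t => t.2) ≤ #(B + C) := by
  refine card_image_le_of_comp (fun x => x.1 + x.2) ?_ ?_
  · rintro ⟨a, b, c⟩ ht
    exact add_mem_add (mem_lexMinReps.1 ht).1.2.1 (mem_lexMinReps.1 ht).1.2.2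
  · rintro ⟨a, b, c⟩ ht ⟨a', b', c'⟩ ht' (h : b + c = b' + c')
    obtain ⟨⟨ha, hb, hc⟩, hmin⟩ := mem_lexMinReps.1 ht
    obtain ⟨⟨ha', hb', hc'⟩, hmin'⟩ := mem_lexMinReps.1 ht'
    have hle := hmin a ha b' hb' c' hc' (by rw [add_assoc, ← h, ← add_assoc])
    have hge := hmin' a' ha' b hb c hc (by rw [add_assoc, h, ← add_assoc])
    have hsnd : b = b' :=
      le_antisymm ((Prod.Lex.toLex_le_toLex'.1 hle).2 rfl) ((Prod.Lex.toLex_le_toLex'.1 hge).2 rfl)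
    subst hsnd
    exact Prod.ext rfl (add_left_cancel h)

end LexMinReps

theorem stmt_2 {G : Type*} [AddCommGroup G] [DecidableEq G]
    (A B C : Finset G) :
    (A + B + C).card ^ 2 ≤ (A + B).card * (A + C).card * (B + C).card := by
  let : LinearOrder G := IsWellOrder.linearOrder WellOrderingRel
  calc #(A + B + C) ^ 2 ≤ #(lexMinReps A B C) ^ 2 := by
        gcongr; exact card_add_add_le_card_lexMinReps A B C
    _ ≤ _ := loomis_whitney_card _
    _ ≤ #(A + B) * #(A + C) * #(B + C) := by
        gcongr
        exacts [card_image_lexMinReps_le_card_add_ab A B C,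
          card_image_lexMinReps_le_card_add_ac A B C, card_image_lexMinReps_le_card_add_bc A B C]
end

section
/- Let f and g be completely multiplicative arithmetic functions with 0 ≤ f(p) ≤ g(p) < p for every prime p. Then for every real X ≥ 1, ∑_{n ≤ X} f(n)/n ≥ (∏_{p ≤ X} (1 − g(p)/p)) · (∏_{p ≤ X} (1 − f(p)/p))^{−1} · ∑_{n ≤ X} g(n)/n. -/
/-!
Put `F n = f n / n` and `G n = g n / n`. Both are completely multiplicative, so `μF` is the
Dirichlet inverse of `F` and `G = h * F` with `h = μF * G`. The multiplicative function `h` takes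
the value `G(p)^k (G(p) - F(p)) ≥ 0` at `p^(k+1)`, hence
`∑_{n ≤ N} G(n) = ∑_{a ≤ N} h(a) ∑_{b ≤ N/a} F(b) ≤ (∑_{a ≤ N} h(a)) (∑_{b ≤ N} F(b))`.
Every `a ≤ N` has all its prime factors `≤ N`, so by positivity `∑_{a ≤ N} h(a)` is bounded by
the Euler product `∏_{p ≤ N} ∑_k h(p^k) = ∏_{p ≤ N} (1 - F(p)) / (1 - G(p))`.
-/

open Finset Nat
open scoped ArithmeticFunction.Moebius ArithmeticFunction.zeta

namespace ArithmeticFunction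

variable {R : Type*}

def IsCompletelyMultiplicative [MonoidWithZero R] (f : ArithmeticFunction R) : Prop :=
  f 1 = 1 ∧ ∀ m n, f (m * n) = f m * f n

namespace IsCompletelyMultiplicative

section CommSemiring

variable [CommSemiring R] {f : ArithmeticFunction R}

theorem isMultiplicative (hf : f.IsCompletelyMultiplicative) : f.IsMultiplicative :=
  ⟨hf.1, fun _ => hf.2 _ _⟩

theorem map_pow (hf : f.IsCompletelyMultiplicative) (n k : ℕ) : f (n ^ k) = f n ^ k := by
  induction k with
  | zero => simpa using hf.1
  | succ k ih => rw [pow_succ, hf.2, ih, pow_succ]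

theorem pmul_mul_pmul (hf : f.IsCompletelyMultiplicative) (u v : ArithmeticFunction R) :
    u.pmul f * v.pmul f = (u * v).pmul f := by
  ext n
  simp only [mul_apply, pmul_apply, sum_mul]
  refine sum_congr rfl fun x hx => ?_
  obtain ⟨rfl, -⟩ := mem_divisorsAntidiagonal.1 hx
  rw [hf.2]
  ring

theorem one_pmul (hf : f.IsCompletelyMultiplicative) :
    (1 : ArithmeticFunction R).pmul f = 1 := by
  ext n
  simp only [pmul_apply, one_apply]
  split_ifs with hn
  · rw [hn, hf.1, one_mul]
  · rw [zero_mul]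

end CommSemiring

section CommRing

variable [CommRing R] {f g : ArithmeticFunction R}

theorem moebius_pmul_mul_self (hf : f.IsCompletelyMultiplicative) :
    (μ : ArithmeticFunction R).pmul f * f = 1 := by
  calc (μ : ArithmeticFunction R).pmul f * f
      = (μ : ArithmeticFunction R).pmul f * (ζ : ArithmeticFunction R).pmul f := by
        rw [zeta_pmul]
    _ = 1 := by rw [hf.pmul_mul_pmul, coe_moebius_mul_coe_zeta, hf.one_pmul]

theorem isMultiplicative_moebius_pmul_mul (hf : f.IsCompletelyMultiplicative)
    (hg : g.IsCompletelyMultiplicative) :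
    ((μ : ArithmeticFunction R).pmul f * g).IsMultiplicative :=
  (isMultiplicative_moebius.intCast.pmul hf.isMultiplicative).mul hg.isMultiplicative

theorem moebius_pmul_mul_apply_prime_pow_succ (hf : f.IsCompletelyMultiplicative)
    (hg : g.IsCompletelyMultiplicative) {p : ℕ} (hp : p.Prime) (k : ℕ) :
    ((μ : ArithmeticFunction R).pmul f * g) (p ^ (k + 1)) = g p ^ k * (g p - f p) := by
  rw [mul_apply,
    Nat.sum_divisorsAntidiagonal (fun a b => (μ : ArithmeticFunction R).pmul f a * g b),
    Nat.sum_divisors_prime_pow hp, sum_range_succ', sum_range_succ',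
    sum_eq_zero fun i _ => by simp [pmul_apply, moebius_apply_prime_pow hp]]
  rw [zero_add, Nat.pow_div (Nat.le_add_left 1 k) hp.pos, Nat.add_sub_cancel, pow_one, pow_zero,
    Nat.div_one]
  simp only [pmul_apply, intCoe_apply, moebius_apply_prime hp, moebius_apply_one, hf.1,
    hg.map_pow]
  push_cast
  ring

end CommRing

end IsCompletelyMultiplicative

theorem IsMultiplicative.apply_nonneg [CommSemiring R] [PartialOrder R] [IsOrderedRing R]
    {f : ArithmeticFunction R} (hf : f.IsMultiplicative)
    (h : ∀ p k, p.Prime → 0 ≤ f (p ^ k)) (n : ℕ) : 0 ≤ f n := by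
  rcases eq_or_ne n 0 with rfl | hn
  · rw [map_zero]
  rw [hf.multiplicative_factorization f hn]
  exact prod_nonneg fun p hp => h _ _ (prime_of_mem_primeFactors hp)

theorem IsMultiplicative.sum_Ioc_le_prod_primesLE {f : ArithmeticFunction ℝ}
    (hf : f.IsMultiplicative) (hf0 : ∀ n, 0 ≤ f n) {E : ℕ → ℝ}
    (hE : ∀ p, p.Prime → HasSum (fun k => f (p ^ k)) (E p)) (N : ℕ) :
    ∑ n ∈ Ioc 0 N, f n ≤ ∏ p ∈ primesLE N, E p := by
  have hnorm : ∀ {p : ℕ}, p.Prime → Summable fun k => ‖f (p ^ k)‖ := fun hp => by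
    simpa only [Real.norm_of_nonneg (hf0 _)] using (hE _ hp).summable
  have hsmooth := (EulerProduct.summable_and_hasSum_smoothNumbers_prod_primesBelow_tsum
    hf.map_one (fun h => hf.map_mul_of_coprime h) hnorm (N + 1)).2
  rw [prod_congr rfl fun p hp => (hE p (prime_of_mem_primesBelow hp)).tsum_eq] at hsmooth
  have hind := hasSum_subtype_iff_indicator.1 (show HasSum (f ∘ Subtype.val) _ from hsmooth)
  calc ∑ n ∈ Ioc 0 N, f n = ∑ n ∈ Ioc 0 N, (N + 1).smoothNumbers.indicator f n :=
        sum_congr rfl fun n hn => (Set.indicator_of_mem (mem_smoothNumbers_of_lt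
          (mem_Ioc.1 hn).1 (Nat.lt_succ_of_le (mem_Ioc.1 hn).2)) f).symm
    _ ≤ ∏ p ∈ primesLE N, E p :=
        sum_le_hasSum _ (fun n _ => Set.indicator_nonneg (fun n _ => hf0 n) n) hind

namespace IsCompletelyMultiplicative

variable {f g : ArithmeticFunction ℝ}

theorem hasSum_moebius_pmul_mul_apply_prime_pow (hf : f.IsCompletelyMultiplicative)
    (hg : g.IsCompletelyMultiplicative) {p : ℕ} (hp : p.Prime) (hg0 : 0 ≤ g p) (hg1 : g p < 1) :
    HasSum (fun k => ((μ : ArithmeticFunction ℝ).pmul f * g) (p ^ k))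
      ((1 - f p) / (1 - g p)) := by
  rw [← hasSum_nat_add_iff' 1]
  simp only [moebius_pmul_mul_apply_prime_pow_succ hf hg hp, sum_range_one, pow_zero,
    (isMultiplicative_moebius_pmul_mul hf hg).map_one]
  convert (hasSum_geometric_of_lt_one hg0 hg1).mul_right (g p - f p) using 1
  · ext k
    ring
  · field_simp [(sub_pos.2 hg1).ne']
    ring

theorem sum_Ioc_le_prod_mul_sum_Ioc (hf : f.IsCompletelyMultiplicative)
    (hg : g.IsCompletelyMultiplicative)
    (hfg : ∀ p, p.Prime → 0 ≤ f p ∧ f p ≤ g p ∧ g p < 1) (N : ℕ) :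
    ∑ n ∈ Ioc 0 N, g n ≤ (∏ p ∈ primesLE N, (1 - f p) / (1 - g p)) * ∑ n ∈ Ioc 0 N, f n := by
  set h := (μ : ArithmeticFunction ℝ).pmul f * g
  have hh : h.IsMultiplicative := isMultiplicative_moebius_pmul_mul hf hg
  have hh0 : ∀ n, 0 ≤ h n := hh.apply_nonneg fun p k hp => by
    obtain ⟨hf0, hfg, -⟩ := hfg p hp
    cases k with
    | zero => rw [pow_zero, hh.map_one]; exact zero_le_one
    | succ k =>
      rw [moebius_pmul_mul_apply_prime_pow_succ hf hg hp]
      exact mul_nonneg (pow_nonneg (hf0.trans hfg) k) (sub_nonneg.2 hfg)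
  have hf0 : ∀ n, 0 ≤ f n := hf.isMultiplicative.apply_nonneg fun p k hp =>
    hf.map_pow p k ▸ pow_nonneg (hfg p hp).1 k
  have hhf : h * f = g := by rw [mul_right_comm, hf.moebius_pmul_mul_self, one_mul]
  have hEuler : ∑ n ∈ Ioc 0 N, h n ≤ ∏ p ∈ primesLE N, (1 - f p) / (1 - g p) :=
    hh.sum_Ioc_le_prod_primesLE hh0 (fun p hp =>
      hasSum_moebius_pmul_mul_apply_prime_pow hf hg hp ((hfg p hp).1.trans (hfg p hp).2.1)
        (hfg p hp).2.2) N
  calc ∑ n ∈ Ioc 0 N, g n = ∑ n ∈ Ioc 0 N, h n * ∑ m ∈ Ioc 0 (N / n), f m := by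
        rw [← hhf, sum_Ioc_mul_eq_sum_sum]
    _ ≤ ∑ n ∈ Ioc 0 N, h n * ∑ m ∈ Ioc 0 N, f m := by
        gcongr with n
        · exact hh0 n
        · exact fun m _ _ => hf0 m
        · exact Nat.div_le_self N n
    _ = (∑ n ∈ Ioc 0 N, h n) * ∑ m ∈ Ioc 0 N, f m := by rw [sum_mul]
    _ ≤ _ := mul_le_mul_of_nonneg_right hEuler (sum_nonneg fun m _ => hf0 m)

end IsCompletelyMultiplicative

noncomputable def divCast (f : ℕ → ℝ) : ArithmeticFunction ℝ := ⟨fun n => f n / n, by simp⟩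

@[simp]
theorem divCast_apply (f : ℕ → ℝ) (n : ℕ) : divCast f n = f n / n := rfl

theorem isCompletelyMultiplicative_divCast {f : ℕ → ℝ} (hf1 : f 1 = 1)
    (hmul : ∀ m n, f (m * n) = f m * f n) : (divCast f).IsCompletelyMultiplicative :=
  ⟨by simp [hf1], fun m n => by simp only [divCast_apply, hmul, Nat.cast_mul, mul_div_mul_comm]⟩

end ArithmeticFunction

open ArithmeticFunction in
theorem stmt_3_general (f g : ℕ → ℝ)
    (hf1 : f 1 = 1) (hfmul : ∀ m n : ℕ, f (m * n) = f m * f n)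
    (hg1 : g 1 = 1) (hgmul : ∀ m n : ℕ, g (m * n) = g m * g n)
    (hfg : ∀ p : ℕ, p.Prime → 0 ≤ f p ∧ f p ≤ g p ∧ g p < p)
    (X : ℝ) :
    ∑ n ∈ Finset.Icc 1 ⌊X⌋₊, f n / n ≥
      (∏ p ∈ (Finset.Icc 1 ⌊X⌋₊).filter Nat.Prime, (1 - g p / p)) *
      (∏ p ∈ (Finset.Icc 1 ⌊X⌋₊).filter Nat.Prime, (1 - f p / p))⁻¹ *
      ∑ n ∈ Finset.Icc 1 ⌊X⌋₊, g n / n := by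
  have hfg' : ∀ p : ℕ, p.Prime → 0 ≤ f p / p ∧ f p / p ≤ g p / p ∧ g p / p < 1 :=
    fun p hp => by
      obtain ⟨hf0, hfg, hgp⟩ := hfg p hp
      have hp0 : (0 : ℝ) < p := by exact_mod_cast hp.pos
      exact ⟨div_nonneg hf0 hp0.le, by gcongr, (div_lt_one hp0).2 hgp⟩
  set N := ⌊X⌋₊
  have key := IsCompletelyMultiplicative.sum_Ioc_le_prod_mul_sum_Ioc
    (isCompletelyMultiplicative_divCast hf1 hfmul) (isCompletelyMultiplicative_divCast hg1 hgmul)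
    hfg' N
  simp only [divCast_apply, prod_div_distrib] at key
  rw [← primesLE_eq_filter_Icc_one, show Icc 1 N = Ioc 0 N from Icc_add_one_left_eq_Ioc 0 N,
    ge_iff_le]
  set Pf := ∏ p ∈ primesLE N, (1 - f p / p)
  set Pg := ∏ p ∈ primesLE N, (1 - g p / p)
  have hPf : 0 < Pf := prod_pos fun p hp =>
    have hp' := hfg' p (prime_of_mem_primesLE hp)
    sub_pos.2 (hp'.2.1.trans_lt hp'.2.2)
  have hPg : 0 < Pg := prod_pos fun p hp => sub_pos.2 (hfg' p (prime_of_mem_primesLE hp)).2.2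
  calc _ ≤ Pg * Pf⁻¹ * (Pf / Pg * ∑ n ∈ Ioc 0 N, f n / n) := by gcongr
    _ = _ := by field_simp

theorem stmt_3 (f g : ℕ → ℝ)
    (hf1 : f 1 = 1) (hfmul : ∀ m n : ℕ, f (m * n) = f m * f n)
    (hg1 : g 1 = 1) (hgmul : ∀ m n : ℕ, g (m * n) = g m * g n)
    (hfg : ∀ p : ℕ, p.Prime → 0 ≤ f p ∧ f p ≤ g p ∧ g p < p)
    (X : ℝ) (hX : 1 ≤ X) :
    ∑ n ∈ Finset.Icc 1 ⌊X⌋₊, f n / n ≥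
      (∏ p ∈ (Finset.Icc 1 ⌊X⌋₊).filter Nat.Prime, (1 - g p / p)) *
      (∏ p ∈ (Finset.Icc 1 ⌊X⌋₊).filter Nat.Prime, (1 - f p / p))⁻¹ *
      ∑ n ∈ Finset.Icc 1 ⌊X⌋₊, g n / n :=
  stmt_3_general f g hf1 hfmul hg1 hgmul hfg X
end

section
/- Let P₀ be a set of primes, let x be real, and let A be a finite set of integers contained in [1, x] with |A| = k ≥ 2. For each prime p, let ν(p) denote the number of residue classes mod p occupied by A. Then for every real y ≥ 10, ∑_{y/2 < p ≤ y, p ∈ P₀} ν(p)/p ≥ k · ∑_{y/2 < p ≤ y, p ∈ P₀} 1/p − (k² − k)·(log x)/((y/2)·log(y/2)). -/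
open scoped Classical

/-!
For a prime `p`, every element of `A` beyond the first one in its residue class collides with
another element of `A` mod `p`, so `k - ν(p)` is at most the number of ordered pairs `a ≠ b` in
`A` with `p ∣ a - b`. Weighting by `1 / p` and swapping the sums, the deficit
`k ∑ 1/p - ∑ ν(p)/p` is bounded by a sum over the `k² - k` such pairs of `∑_{p ∣ a - b} 1/p`.
Since `0 < |a - b| < x`, the difference `a - b` has at most `log x / log (y/2)` prime factors
`p > y/2`, each contributing less than `1 / (y/2)`.
-/

open Finset

theorem Finset.card_le_card_image_add_card_collisions {α β : Type*} [DecidableEq α]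
    [DecidableEq β] (s : Finset α) (f : α → β) :
    #s ≤ #(s.image f) + #{q ∈ s.offDiag | f q.1 = f q.2} := by
  set B := {q ∈ s.offDiag | f q.1 = f q.2}.image Prod.fst
  have hB : #B ≤ #{q ∈ s.offDiag | f q.1 = f q.2} := card_image_le
  have hsdiff : #(s \ B) ≤ #(s.image f) := by
    refine card_le_card_of_injOn f (fun a ha => mem_image_of_mem f (mem_sdiff.1 ha).1) ?_
    intro a ha b hb hab
    by_contra hne
    obtain ⟨has, haB⟩ := mem_sdiff.1 ha
    exact haB (mem_image.2 ⟨(a, b), by simp [has, (mem_sdiff.1 hb).1, hne, hab], rfl⟩)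
  have := card_le_card_sdiff_add_card (s := s) (t := B)
  omega

theorem sum_mul_card_sub_card_image_emod_le_sum_offDiag (A : Finset ℤ) (S : Finset ℕ)
    (w : ℕ → ℝ) (hw : ∀ p ∈ S, 0 ≤ w p) :
    ∑ p ∈ S, w p * ((#A : ℝ) - #(A.image (· % (p : ℤ)))) ≤
      ∑ q ∈ A.offDiag, ∑ p ∈ S with ((p : ℕ) : ℤ) ∣ q.1 - q.2, w p := by
  have hdeficit (p : ℕ) :
      (#A : ℝ) - #(A.image (· % (p : ℤ))) ≤ #{q ∈ A.offDiag | (p : ℤ) ∣ q.1 - q.2} := by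
    have h := A.card_le_card_image_add_card_collisions (· % (p : ℤ))
    have hcoll : {q ∈ A.offDiag | q.1 % (p : ℤ) = q.2 % (p : ℤ)} =
        {q ∈ A.offDiag | (p : ℤ) ∣ q.1 - q.2} :=
      filter_congr fun q _ => Int.modEq_iff_dvd.trans dvd_sub_comm
    rw [hcoll] at h
    have h' : (#A : ℝ) ≤
        #(A.image (· % (p : ℤ))) + #{q ∈ A.offDiag | (p : ℤ) ∣ q.1 - q.2} := by
      exact_mod_cast h
    linarith
  calc ∑ p ∈ S, w p * ((#A : ℝ) - #(A.image (· % (p : ℤ))))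
      ≤ ∑ p ∈ S, w p * #{q ∈ A.offDiag | (p : ℤ) ∣ q.1 - q.2} :=
        sum_le_sum fun p hp => mul_le_mul_of_nonneg_left (hdeficit p) (hw p hp)
    _ = ∑ q ∈ A.offDiag, ∑ p ∈ S with ((p : ℕ) : ℤ) ∣ q.1 - q.2, w p := by
        simp only [card_filter, Nat.cast_sum, Nat.cast_ite, Nat.cast_one, Nat.cast_zero,
          mul_sum, mul_ite, mul_one, mul_zero, sum_filter]
        exact sum_comm

theorem pow_card_le_abs_of_prime_dvd {T : Finset ℕ} {d : ℤ} (hd : d ≠ 0)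
    (hT : ∀ p ∈ T, p.Prime ∧ (p : ℤ) ∣ d) {z : ℝ} (hz : 0 ≤ z) (hTz : ∀ p ∈ T, z ≤ p) :
    z ^ #T ≤ |(d : ℝ)| := by
  have hdvd : ∏ p ∈ T, p ∣ d.natAbs :=
    prod_primes_dvd _ (fun p hp => (hT p hp).1.prime)
      fun p hp => Int.natCast_dvd.1 (hT p hp).2
  calc z ^ #T = ∏ _p ∈ T, z := (prod_const z).symm
    _ ≤ ∏ p ∈ T, (p : ℝ) := prod_le_prod (fun _ _ => hz) hTz
    _ ≤ d.natAbs := by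
        rw [← Nat.cast_prod]; exact_mod_cast Nat.le_of_dvd (Int.natAbs_pos.2 hd) hdvd
    _ = |(d : ℝ)| := by simp [Nat.cast_natAbs]

theorem sum_one_div_filter_dvd_le_log_div {S : Finset ℕ} (hS : ∀ p ∈ S, p.Prime) {z : ℝ}
    (hz : 1 < z) (hSz : ∀ p ∈ S, z ≤ p) {d : ℤ} (hd : d ≠ 0) :
    ∑ p ∈ S with ((p : ℕ) : ℤ) ∣ d, (1 : ℝ) / p ≤ Real.log |(d : ℝ)| / (z * Real.log z) := by
  set T := {p ∈ S | ((p : ℕ) : ℤ) ∣ d}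
  have hTz : ∀ p ∈ T, z ≤ p := fun p hp => hSz p (mem_filter.1 hp).1
  have hlogz : 0 < Real.log z := Real.log_pos hz
  have hcard : #T * Real.log z ≤ Real.log |(d : ℝ)| := by
    have hpow := pow_card_le_abs_of_prime_dvd hd
      (fun p hp => ⟨hS p (mem_filter.1 hp).1, (mem_filter.1 hp).2⟩) (by linarith) hTz
    simpa [Real.log_pow] using Real.log_le_log (by positivity) hpow
  calc ∑ p ∈ T, (1 : ℝ) / p ≤ ∑ _p ∈ T, 1 / z :=
        sum_le_sum fun p hp => one_div_le_one_div_of_le (by linarith) (hTz p hp)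
    _ = #T * Real.log z / (z * Real.log z) := by
        rw [sum_const, nsmul_eq_mul]; field_simp
    _ ≤ Real.log |(d : ℝ)| / (z * Real.log z) := by gcongr

theorem sum_one_div_filter_dvd_sub_le_log_div {S : Finset ℕ} (hS : ∀ p ∈ S, p.Prime)
    {z : ℝ} (hz : 1 < z) (hSz : ∀ p ∈ S, z ≤ p) {x : ℝ} {a b : ℤ} (ha : 0 ≤ a) (hax : a ≤ x)
    (hb : 0 ≤ b) (hbx : b ≤ x) (hab : a ≠ b) :
    ∑ p ∈ S with ((p : ℕ) : ℤ) ∣ a - b, (1 : ℝ) / p ≤ Real.log x / (z * Real.log z) := by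
  have hd : a - b ≠ 0 := sub_ne_zero.2 hab
  have hdist : |((a - b : ℤ) : ℝ)| ≤ x := by
    push_cast
    exact abs_sub_le_of_nonneg_of_le (by positivity) hax (by positivity) hbx
  have hlogz : 0 < Real.log z := Real.log_pos hz
  refine (sum_one_div_filter_dvd_le_log_div hS hz hSz hd).trans ?_
  gcongr

theorem stmt_4_general (P₀ : Set ℕ)
    (x : ℝ) (A : Finset ℤ) (hAx : ∀ a ∈ A, 1 ≤ a ∧ (a : ℝ) ≤ x)
    (k : ℕ) (hk : A.card = k)
    (y : ℝ) (hy : 10 ≤ y) :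
    ∑ p ∈ (Finset.range (⌊y⌋₊ + 1)).filter
        (fun p => Nat.Prime p ∧ p ∈ P₀ ∧ y / 2 < (p : ℝ)),
      ((A.image (fun a => a % (p : ℤ))).card : ℝ) / p ≥
    (k : ℝ) * ∑ p ∈ (Finset.range (⌊y⌋₊ + 1)).filter
        (fun p => Nat.Prime p ∧ p ∈ P₀ ∧ y / 2 < (p : ℝ)), (1 : ℝ) / p
      - ((k : ℝ) ^ 2 - k) * Real.log x / ((y / 2) * Real.log (y / 2)) := by
  set S := (Finset.range (⌊y⌋₊ + 1)).filter (fun p => Nat.Prime p ∧ p ∈ P₀ ∧ y / 2 < (p : ℝ))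
  set c := Real.log x / ((y / 2) * Real.log (y / 2))
  have hpair : ∀ q ∈ A.offDiag, ∑ p ∈ S with ((p : ℕ) : ℤ) ∣ q.1 - q.2, (1 : ℝ) / p ≤ c := by
    intro q hq
    obtain ⟨ha, hb, hne⟩ := mem_offDiag.1 hq
    exact sum_one_div_filter_dvd_sub_le_log_div (fun p hp => (mem_filter.1 hp).2.1)
      (by linarith) (fun p hp => (mem_filter.1 hp).2.2.2.le) (by linarith [(hAx _ ha).1])
      (hAx _ ha).2 (by linarith [(hAx _ hb).1]) (hAx _ hb).2 hne
  have hsieve := sum_mul_card_sub_card_image_emod_le_sum_offDiag A S (fun p => 1 / (p : ℝ))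
    (fun p _ => by positivity)
  have hpairs : (#A.offDiag : ℝ) = (k : ℝ) ^ 2 - k := by
    rw [offDiag_card, hk, Nat.cast_sub (Nat.le_mul_self k)]; push_cast; ring
  rw [ge_iff_le, mul_div_assoc]
  calc (k : ℝ) * ∑ p ∈ S, 1 / (p : ℝ) - ((k : ℝ) ^ 2 - k) * c
      = (k : ℝ) * ∑ p ∈ S, 1 / (p : ℝ) - ∑ _q ∈ A.offDiag, c := by
        rw [sum_const, nsmul_eq_mul, hpairs]
    _ ≤ (k : ℝ) * ∑ p ∈ S, 1 / (p : ℝ) -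
          ∑ q ∈ A.offDiag, ∑ p ∈ S with ((p : ℕ) : ℤ) ∣ q.1 - q.2, 1 / (p : ℝ) := by
        gcongr with q hq; exact hpair q hq
    _ ≤ (k : ℝ) * ∑ p ∈ S, 1 / (p : ℝ) -
          ∑ p ∈ S, 1 / (p : ℝ) * ((#A : ℝ) - #(A.image (· % (p : ℤ)))) := by
        linarith
    _ = ∑ p ∈ S, (#(A.image (· % (p : ℤ))) : ℝ) / p := by
        rw [hk, mul_sum, ← sum_sub_distrib]
        exact sum_congr rfl fun p _ => by ring

theorem stmt_4 (P₀ : Set ℕ) (hP₀ : ∀ p ∈ P₀, Nat.Prime p)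
    (x : ℝ) (A : Finset ℤ) (hAx : ∀ a ∈ A, 1 ≤ a ∧ (a : ℝ) ≤ x)
    (k : ℕ) (hk : A.card = k) (hk2 : 2 ≤ k)
    (y : ℝ) (hy : 10 ≤ y) :
    ∑ p ∈ (Finset.range (⌊y⌋₊ + 1)).filter
        (fun p => Nat.Prime p ∧ p ∈ P₀ ∧ y / 2 < (p : ℝ)),
      ((A.image (fun a => a % (p : ℤ))).card : ℝ) / p ≥
    (k : ℝ) * ∑ p ∈ (Finset.range (⌊y⌋₊ + 1)).filter
        (fun p => Nat.Prime p ∧ p ∈ P₀ ∧ y / 2 < (p : ℝ)), (1 : ℝ) / p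
      - ((k : ℝ) ^ 2 - k) * Real.log x / ((y / 2) * Real.log (y / 2)) :=
  stmt_4_general P₀ x A hAx k hk y hy
end

section
/- Gallagher's larger sieve: Let N ≥ 2, let P₀ be a finite set of primes, and let A ⊆ {1, ..., N} be a set of integers which, for each p ∈ P₀, occupies at most ν(p) residue classes modulo p, where 1 ≤ ν(p) ≤ p. Suppose −log N + ∑_{p ∈ P₀} (log p)/ν(p) > 0. Then |A| ≤ (−log N + ∑_{p ∈ P₀} log p) / (−log N + ∑_{p ∈ P₀} (log p)/ν(p)). -/
/-!
Gallagher's argument counts the pairs `(a, b) ∈ A × A` with `a ≡ b [MOD p]`. Since `A` meets at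
most `ν p` residue classes, Cauchy–Schwarz over the classes gives at least `|A|² / ν p` such pairs.
Weighting by `log p` and summing over `p`, each diagonal pair contributes `∑ log p`, while for
`a ≠ b` the primes of `P₀` dividing `a - b` have product at most `|a - b| ≤ N`, so they contribute
at most `log N`. Hence `|A|² ∑ log p / ν p ≤ |A| ∑ log p + |A| (|A| - 1) log N`, which rearranges
to the bound.
-/

open Finset Real

namespace Finset

variable {α β : Type*} [DecidableEq β]

theorem sum_sq_card_fiber_eq_card_filter (s : Finset α) (f : α → β) :
    ∑ b ∈ s.image f, #{a ∈ s | f a = b} ^ 2 = #{q ∈ s ×ˢ s | f q.1 = f q.2} := by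
  rw [card_eq_sum_card_fiberwise (f := fun q => f q.1) (t := s.image f)
    fun q hq => mem_image_of_mem f (mem_product.1 (mem_filter.1 hq).1).1]
  refine sum_congr rfl fun b _ => ?_
  rw [sq, ← card_product, filter_filter]
  congr 1
  ext q
  simp only [mem_product, mem_filter]
  constructor
  · rintro ⟨⟨h₁, e₁⟩, h₂, e₂⟩
    exact ⟨⟨h₁, h₂⟩, e₁.trans e₂.symm, e₁⟩
  · rintro ⟨⟨h₁, h₂⟩, e, e₁⟩
    exact ⟨⟨h₁, e₁⟩, h₂, e ▸ e₁⟩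

theorem sq_card_le_card_image_mul_card_filter (s : Finset α) (f : α → β) :
    #s ^ 2 ≤ #(s.image f) * #{q ∈ s ×ˢ s | f q.1 = f q.2} := by
  rw [← sum_sq_card_fiber_eq_card_filter, card_eq_sum_card_image f s]
  exact sq_sum_le_card_mul_sum_sq

theorem sq_card_div_le_card_filter {s : Finset α} {f : α → β} {ν : ℝ} (hν : 0 < ν)
    (himage : #(s.image f) ≤ ν) : (#s : ℝ) ^ 2 / ν ≤ #{q ∈ s ×ˢ s | f q.1 = f q.2} := by
  rw [div_le_iff₀ hν, mul_comm]
  calc (#s : ℝ) ^ 2 ≤ #(s.image f) * #{q ∈ s ×ˢ s | f q.1 = f q.2} := by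
        exact_mod_cast sq_card_le_card_image_mul_card_filter s f
    _ ≤ _ := by gcongr

end Finset

theorem Real.sum_log_le_log_of_forall_prime_dvd {S : Finset ℕ} {n : ℕ} (hn : n ≠ 0)
    (hS : ∀ p ∈ S, p.Prime ∧ p ∣ n) : ∑ p ∈ S, log p ≤ log n := by
  have hprod : ∏ p ∈ S, p ∣ n :=
    prod_primes_dvd n (fun p hp => (hS p hp).1.prime) fun p hp => (hS p hp).2
  rw [← log_prod fun p hp => Nat.cast_ne_zero.2 (hS p hp).1.ne_zero, ← Nat.cast_prod]
  refine log_le_log ?_ (by exact_mod_cast Nat.le_of_dvd (Nat.pos_of_ne_zero hn) hprod)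
  exact_mod_cast prod_pos fun p hp => (hS p hp).1.pos

theorem sum_log_filter_modEq_le_log {P : Finset ℕ} (hP : ∀ p ∈ P, p.Prime) {a b N : ℕ}
    (hab : a ≠ b) (ha : a ≤ N) (hb : b ≤ N) :
    ∑ p ∈ P with a ≡ b [MOD p], log p ≤ log N := by
  have hn : ((b : ℤ) - a).natAbs ≠ 0 := by omega
  have hnN : ((b : ℤ) - a).natAbs ≤ N := by omega
  refine (Real.sum_log_le_log_of_forall_prime_dvd hn fun p hp => ?_).trans
    (log_le_log (by exact_mod_cast Nat.pos_of_ne_zero hn) (by exact_mod_cast hnN))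
  obtain ⟨hpP, hmod⟩ := mem_filter.1 hp
  exact ⟨hP p hpP, Int.natCast_dvd.1 hmod.dvd⟩

theorem sum_log_mul_card_modEq_le {P A : Finset ℕ} (hP : ∀ p ∈ P, p.Prime) {N : ℕ}
    (hA : ∀ a ∈ A, a ≤ N) :
    ∑ p ∈ P, log p * #{q ∈ A ×ˢ A | q.1 % p = q.2 % p} ≤
      #A * ∑ p ∈ P, log p + #A * (#A - 1) * log N := by
  have hswap : ∑ p ∈ P, log p * #{q ∈ A ×ˢ A | q.1 % p = q.2 % p} =
      ∑ q ∈ A ×ˢ A, ∑ p ∈ P with q.1 ≡ q.2 [MOD p], log p := by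
    simp_rw [mul_comm (log _), ← nsmul_eq_mul, ← sum_const, sum_filter]
    exact sum_comm
  have hdiag : ∑ q ∈ A.diag, ∑ p ∈ P with q.1 ≡ q.2 [MOD p], log p = #A * ∑ p ∈ P, log p := by
    rw [sum_congr rfl fun q hq => by
        rw [(mem_diag.1 hq).2, filter_true_of_mem fun p _ => Nat.ModEq.refl q.2],
      sum_const, diag_card, nsmul_eq_mul]
  have hoffDiag : ∑ q ∈ A.offDiag, ∑ p ∈ P with q.1 ≡ q.2 [MOD p], log p ≤
      #A * (#A - 1) * log N := by
    have hcard : (#A.offDiag : ℝ) = #A * (#A - 1) := by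
      rw [offDiag_card, Nat.cast_sub (Nat.le_mul_self _), Nat.cast_mul]; ring
    refine (sum_le_sum fun q hq => ?_).trans_eq (by rw [sum_const, nsmul_eq_mul, hcard])
    obtain ⟨ha, hb, hab⟩ := mem_offDiag.1 hq
    exact sum_log_filter_modEq_le_log hP hab (hA _ ha) (hA _ hb)
  rw [hswap, ← diag_union_offDiag, sum_union (disjoint_diag_offDiag _), hdiag]
  gcongr

theorem stmt_6_general (N : ℕ) (P₀ : Finset ℕ)
    (hP₀ : ∀ p ∈ P₀, Nat.Prime p)
    (A : Finset ℕ) (hA : A ⊆ Finset.Icc 1 N)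
    (ν : ℕ → ℝ)
    (hν : ∀ p ∈ P₀, 1 ≤ ν p ∧ ν p ≤ p ∧ ((A.image (· % p)).card : ℝ) ≤ ν p)
    (hpos : 0 < -Real.log N + ∑ p ∈ P₀, Real.log p / ν p) :
    (A.card : ℝ) ≤ (-Real.log N + ∑ p ∈ P₀, Real.log p) /
      (-Real.log N + ∑ p ∈ P₀, Real.log p / ν p) := by
  have hCauchySchwarz (p) (hp : p ∈ P₀) : (#A : ℝ) ^ 2 * (log p / ν p) ≤
      log p * #{q ∈ A ×ˢ A | q.1 % p = q.2 % p} := by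
    obtain ⟨hν₁, -, hνA⟩ := hν p hp
    rw [mul_div_left_comm]
    exact mul_le_mul_of_nonneg_left
      (sq_card_div_le_card_filter (f := (· % p)) (by linarith) hνA) (log_natCast_nonneg p)
  have hkey : (#A : ℝ) ^ 2 * ∑ p ∈ P₀, log p / ν p ≤
      #A * ∑ p ∈ P₀, log p + #A * (#A - 1) * log N := by
    rw [mul_sum]
    exact (sum_le_sum hCauchySchwarz).trans
      (sum_log_mul_card_modEq_le hP₀ fun a ha => (mem_Icc.1 (hA ha)).2)
  have hTL : ∑ p ∈ P₀, log p / ν p ≤ ∑ p ∈ P₀, log p :=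
    sum_le_sum fun p hp => div_le_self (log_natCast_nonneg p) (hν p hp).1
  rw [le_div_iff₀ hpos]
  rcases (#A).eq_zero_or_pos with h0 | h0
  · simp only [h0, Nat.cast_zero, zero_mul]; linarith
  · have h1 : (1 : ℝ) ≤ #A := by exact_mod_cast h0
    nlinarith

theorem stmt_6 (N : ℕ) (hN : 2 ≤ N) (P₀ : Finset ℕ)
    (hP₀ : ∀ p ∈ P₀, Nat.Prime p)
    (A : Finset ℕ) (hA : A ⊆ Finset.Icc 1 N)
    (ν : ℕ → ℝ)
    (hν : ∀ p ∈ P₀, 1 ≤ ν p ∧ ν p ≤ p ∧ ((A.image (· % p)).card : ℝ) ≤ ν p)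
    (hpos : 0 < -Real.log N + ∑ p ∈ P₀, Real.log p / ν p) :
    (A.card : ℝ) ≤ (-Real.log N + ∑ p ∈ P₀, Real.log p) /
      (-Real.log N + ∑ p ∈ P₀, Real.log p / ν p) :=
  stmt_6_general N P₀ hP₀ A hA ν hν hpos
end
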